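/- Let A, B be probability measures, γ > 0, z₁, z₂ ∈ ℂ⁺, and m₁, m₂ ∈ ℂ⁺ with m_i = ∫ dB(τ)/(τ - z_i + γ∫ u/(1+u m_i)dA(u)) for i = 1,2. Define α(z₁,z₂) = ∫ dB(τ)/((τ - z₁ + γ∫u/(1+um₁)dA(u))(τ - z₂ + γ∫u/(1+um₂)dA(u))) and β(z₁,z₂) = γ∫ u²/((1+um₁)(1+um₂)) dA(u). Then m₁ - m₂ = ((z₁ - z₂)·α(z₁,z₂))/(1 - α(z₁,z₂)β(z₁,z₂)), provided α(z₁,z₂)β(z₁,z₂) ≠ 1. -/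

import Mathlib

/-!
Subtracting the two fixed-point equations under the integral sign gives two resolvent-type
identities: on the `B` side `m₁ - m₂ = (z₁ - z₂ + g₂ - g₁) α`, and on the `A` side
`g₂ - g₁ = (m₁ - m₂) β`. Eliminating `g₂ - g₁` yields `(m₁ - m₂)(1 - αβ) = (z₁ - z₂) α`.
All denominators are nonzero because `Im m > 0` forces `Im g ≤ 0`, so that
`Im (τ - z + g) ≤ -Im z < 0`.
-/

open MeasureTheory Complex

namespace Complex

theorem ofReal_add_ne_zero {w : ℂ} (hw : w.im ≠ 0) (τ : ℝ) : (τ : ℂ) + w ≠ 0 := by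
  intro h
  exact hw (by simpa using congrArg im h)

theorem one_add_ofReal_mul_ne_zero {m : ℂ} (hm : m.im ≠ 0) (u : ℝ) : 1 + u * m ≠ 0 := by
  intro h
  rcases eq_or_ne u 0 with rfl | hu
  · simp at h
  · have him : (1 + u * m).im = u * m.im := by simp
    rw [h, zero_im] at him
    exact mul_ne_zero hu hm him.symm

theorem im_ofReal_div_one_add_ofReal_mul_nonpos {m : ℂ} (hm : 0 ≤ m.im) (u : ℝ) :
    ((u : ℂ) / (1 + u * m)).im ≤ 0 := by
  have him : ((u : ℂ) / (1 + u * m)).im = -(u ^ 2 * m.im / normSq (1 + u * m)) := by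
    simp only [div_im, ofReal_im, add_re, one_re, mul_re, ofReal_re, zero_mul, sub_zero,
      zero_div, add_im, one_im, mul_im, add_zero, zero_add, zero_sub, neg_inj]
    ring
  rw [him, neg_nonpos]
  exact div_nonneg (mul_nonneg (sq_nonneg u) hm) (normSq_nonneg _)

end Complex

theorem integrable_one_div_ofReal_add {μ : Measure ℝ} [IsFiniteMeasure μ] {w : ℂ}
    (hw : w.im ≠ 0) : Integrable (fun τ : ℝ => 1 / ((τ : ℂ) + w)) μ := by
  have hcont : Continuous fun τ : ℝ => 1 / ((τ : ℂ) + w) :=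
    continuous_const.div (continuous_ofReal.add continuous_const) (ofReal_add_ne_zero hw)
  refine (integrable_const |w.im|⁻¹).mono' hcont.aestronglyMeasurable (ae_of_all _ fun τ => ?_)
  have hbound : |w.im| ≤ ‖(τ : ℂ) + w‖ := by simpa using abs_im_le_norm ((τ : ℂ) + w)
  rw [norm_div, norm_one, one_div]
  exact inv_anti₀ (abs_pos.mpr hw) hbound

theorem im_integral_nonpos {X : Type*} [MeasurableSpace X] {μ : Measure X} {f : X → ℂ}
    (hf : Integrable f μ) (h : ∀ x, (f x).im ≤ 0) : (∫ x, f x ∂μ).im ≤ 0 := by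
  rw [← RCLike.im_to_complex, ← integral_im hf]
  exact integral_nonpos h

theorem integral_sub_eq_mul_integral {X : Type*} [MeasurableSpace X] {μ : Measure X}
    {f g h : X → ℂ} (hf : Integrable f μ) (hg : Integrable g μ) (c : ℂ)
    (hfg : ∀ x, f x - g x = c * h x) : ∫ x, f x ∂μ - ∫ x, g x ∂μ = c * ∫ x, h x ∂μ := by
  rw [← integral_sub hf hg, ← integral_const_mul]
  exact integral_congr_ae (ae_of_all _ hfg)

theorem integral_one_div_ofReal_add_sub {μ : Measure ℝ} [IsFiniteMeasure μ] {w₁ w₂ : ℂ}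
    (hw₁ : w₁.im ≠ 0) (hw₂ : w₂.im ≠ 0) :
    ∫ τ : ℝ, 1 / ((τ : ℂ) + w₁) ∂μ - ∫ τ : ℝ, 1 / ((τ : ℂ) + w₂) ∂μ
      = (w₂ - w₁) * ∫ τ : ℝ, 1 / (((τ : ℂ) + w₁) * ((τ : ℂ) + w₂)) ∂μ := by
  refine integral_sub_eq_mul_integral (integrable_one_div_ofReal_add hw₁)
    (integrable_one_div_ofReal_add hw₂) _ fun τ => ?_
  have h₁ := ofReal_add_ne_zero hw₁ τ
  have h₂ := ofReal_add_ne_zero hw₂ τ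
  field_simp
  ring

theorem integral_ofReal_div_one_add_ofReal_mul_sub {μ : Measure ℝ} {m₁ m₂ : ℂ}
    (hm₁ : m₁.im ≠ 0) (hm₂ : m₂.im ≠ 0)
    (hI₁ : Integrable (fun u : ℝ => (u : ℂ) / (1 + u * m₁)) μ)
    (hI₂ : Integrable (fun u : ℝ => (u : ℂ) / (1 + u * m₂)) μ) :
    ∫ u : ℝ, (u : ℂ) / (1 + u * m₂) ∂μ - ∫ u : ℝ, (u : ℂ) / (1 + u * m₁) ∂μ
      = (m₁ - m₂) * ∫ u : ℝ, (u : ℂ) ^ 2 / ((1 + u * m₁) * (1 + u * m₂)) ∂μ := by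
  refine integral_sub_eq_mul_integral hI₂ hI₁ _ fun u => ?_
  have h₁ := one_add_ofReal_mul_ne_zero hm₁ u
  have h₂ := one_add_ofReal_mul_ne_zero hm₂ u
  field_simp
  ring

theorem im_ofReal_mul_integral_nonpos {μ : Measure ℝ} {γ : ℝ} (hγ : 0 ≤ γ) {m : ℂ}
    (hm : 0 ≤ m.im) (hI : Integrable (fun u : ℝ => (u : ℂ) / (1 + u * m)) μ) :
    ((γ : ℂ) * ∫ u : ℝ, (u : ℂ) / (1 + u * m) ∂μ).im ≤ 0 := by
  rw [im_ofReal_mul]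
  exact mul_nonpos_of_nonneg_of_nonpos hγ
    (im_integral_nonpos hI (im_ofReal_div_one_add_ofReal_mul_nonpos hm))

theorem MP_difference_identity_general
    (A B : Measure ℝ) [IsProbabilityMeasure B]
    (γ : ℝ) (hγ : 0 < γ) (z₁ z₂ m₁ m₂ : ℂ)
    (hz₁ : 0 < z₁.im) (hz₂ : 0 < z₂.im) (hm₁ : 0 < m₁.im) (hm₂ : 0 < m₂.im)
    (hIntA₁ : Integrable (fun u : ℝ => (u : ℂ) / (1 + u * m₁)) A)
    (hIntA₂ : Integrable (fun u : ℝ => (u : ℂ) / (1 + u * m₂)) A)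
    (g₁ g₂ : ℂ)
    (hg₁ : g₁ = γ * ∫ u : ℝ, (u : ℂ) / (1 + u * m₁) ∂A)
    (hg₂ : g₂ = γ * ∫ u : ℝ, (u : ℂ) / (1 + u * m₂) ∂A)
    (hfix₁ : m₁ = ∫ τ : ℝ, 1 / ((τ : ℂ) - z₁ + g₁) ∂B)
    (hfix₂ : m₂ = ∫ τ : ℝ, 1 / ((τ : ℂ) - z₂ + g₂) ∂B)
    (α β : ℂ)
    (hα : α = ∫ τ : ℝ, 1 / (((τ : ℂ) - z₁ + g₁) * ((τ : ℂ) - z₂ + g₂)) ∂B)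
    (hβ : β = γ * ∫ u : ℝ, (u : ℂ) ^ 2 / ((1 + u * m₁) * (1 + u * m₂)) ∂A)
    (hne : α * β ≠ 1) :
    m₁ - m₂ = (z₁ - z₂) * α / (1 - α * β) := by
  have hg₁im : g₁.im ≤ 0 := hg₁ ▸ im_ofReal_mul_integral_nonpos hγ.le hm₁.le hIntA₁
  have hg₂im : g₂.im ≤ 0 := hg₂ ▸ im_ofReal_mul_integral_nonpos hγ.le hm₂.le hIntA₂
  have hw₁ : (g₁ - z₁).im ≠ 0 := by rw [sub_im]; linarith
  have hw₂ : (g₂ - z₂).im ≠ 0 := by rw [sub_im]; linarith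
  have hshift : ∀ (z g : ℂ) (τ : ℝ), (τ : ℂ) - z + g = τ + (g - z) := fun _ _ _ => by ring
  simp only [hshift] at hfix₁ hfix₂ hα
  have hB : m₁ - m₂ = (z₁ - z₂ + (g₂ - g₁)) * α := by
    rw [hfix₁, hfix₂, hα, integral_one_div_ofReal_add_sub hw₁ hw₂]
    ring_nf
  have hA : g₂ - g₁ = (m₁ - m₂) * β := by
    rw [hg₁, hg₂, hβ, ← mul_sub, integral_ofReal_div_one_add_ofReal_mul_sub hm₁.ne' hm₂.ne'
      hIntA₁ hIntA₂]
    ring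
  rw [eq_div_iff (sub_ne_zero.mpr hne.symm)]
  linear_combination hB + α * hA

theorem MP_difference_identity
    (A B : Measure ℝ) [IsProbabilityMeasure A] [IsProbabilityMeasure B]
    (γ : ℝ) (hγ : 0 < γ) (z₁ z₂ m₁ m₂ : ℂ)
    (hz₁ : 0 < z₁.im) (hz₂ : 0 < z₂.im) (hm₁ : 0 < m₁.im) (hm₂ : 0 < m₂.im)
    (hIntA₁ : Integrable (fun u : ℝ => (u : ℂ) / (1 + u * m₁)) A)
    (hIntA₂ : Integrable (fun u : ℝ => (u : ℂ) / (1 + u * m₂)) A)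
    (g₁ g₂ : ℂ)
    (hg₁ : g₁ = γ * ∫ u : ℝ, (u : ℂ) / (1 + u * m₁) ∂A)
    (hg₂ : g₂ = γ * ∫ u : ℝ, (u : ℂ) / (1 + u * m₂) ∂A)
    (hfix₁ : m₁ = ∫ τ : ℝ, 1 / ((τ : ℂ) - z₁ + g₁) ∂B)
    (hfix₂ : m₂ = ∫ τ : ℝ, 1 / ((τ : ℂ) - z₂ + g₂) ∂B)
    (α β : ℂ)
    (hα : α = ∫ τ : ℝ, 1 / (((τ : ℂ) - z₁ + g₁) * ((τ : ℂ) - z₂ + g₂)) ∂B)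
    (hβ : β = γ * ∫ u : ℝ, (u : ℂ) ^ 2 / ((1 + u * m₁) * (1 + u * m₂)) ∂A)
    (hIntα : Integrable (fun τ : ℝ => 1 / (((τ : ℂ) - z₁ + g₁) * ((τ : ℂ) - z₂ + g₂))) B)
    (hIntβ : Integrable (fun u : ℝ => (u : ℂ) ^ 2 / ((1 + u * m₁) * (1 + u * m₂))) A)
    (hne : α * β ≠ 1) :
    m₁ - m₂ = (z₁ - z₂) * α / (1 - α * β) :=
  MP_difference_identity_general A B γ hγ z₁ z₂ m₁ m₂ hz₁ hz₂ hm₁ hm₂ hIntA₁ hIntA₂ g₁ g₂ hg₁ hg₂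
    hfix₁ hfix₂ α β hα hβ hne
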